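/- Let A be a skew Boolean ∩-algebra and let a₁, a₂ ∈ A satisfy: for every prime ideal P of A, if a₁ ∉ P and a₂ ∉ P then a₁ θ_P a₂. Then for every prime ideal P of A and every t ∈ A: ((a₁ ∉ P and t θ_P a₁) or (a₂ ∉ P and t θ_P a₂)) holds if and only if (a₁∨a₂ ∉ P and t θ_P (a₁∨a₂)) holds. -/
import Mathlib


universe u

/-- A skew Boolean ∩-algebra. -/
class SkewBooleanInterAlgebra (α : Type u) where
  meet : α → α → α
  join : α → α → α
  zero : α
  rcomp : α → α → α
  inter : α → α → α
  meet_idem : ∀ x, meet x x = x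
  meet_assoc : ∀ x y z, meet (meet x y) z = meet x (meet y z)
  join_idem : ∀ x, join x x = x
  join_assoc : ∀ x y z, join (join x y) z = join x (join y z)
  absorb₁ : ∀ x y, meet x (join x y) = x
  absorb₂ : ∀ x y, meet (join y x) x = x
  absorb₃ : ∀ x y, join x (meet x y) = x
  absorb₄ : ∀ x y, join (meet y x) x = x
  meet_distrib_left : ∀ x y z, meet x (join y z) = join (meet x y) (meet x z)
  meet_distrib_right : ∀ x y z, meet (join y z) x = join (meet y x) (meet z x)
  zero_join : ∀ x, join zero x = x
  join_zero : ∀ x, join x zero = x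
  rcomp_meet : ∀ x y, meet (rcomp x y) (meet x (meet y x)) = zero
  rcomp_join : ∀ x y, join (rcomp x y) (meet x (meet y x)) = x
  normality : ∀ x y z w, meet x (meet y (meet z w)) = meet x (meet z (meet y w))
  regularity : ∀ x y z, join x (join y (join x (join z x))) = join x (join y (join z x))
  inter_le_left : ∀ x y, meet (inter x y) x = inter x y ∧ meet x (inter x y) = inter x y
  inter_le_right : ∀ x y, meet (inter x y) y = inter x y ∧ meet y (inter x y) = inter x y
  inter_glb : ∀ x y z, (meet z x = z ∧ meet x z = z) → (meet z y = z ∧ meet y z = z) →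
    meet z (inter x y) = z ∧ meet (inter x y) z = z

namespace SkewBooleanInterAlgebra

variable {α : Type u} [SkewBooleanInterAlgebra α]

/-- The natural partial order: `x ≤ y` iff `x∧y = x = y∧x`. -/
def nle (x y : α) : Prop := meet x y = x ∧ meet y x = x

/-- The natural preorder: `x ≼ y` iff `x∧y∧x = x`. -/
def npre (x y : α) : Prop := meet x (meet y x) = x

/-- Green's relation `D`: `x D y` iff `x ≼ y` and `y ≼ x`. -/
def dGreen (x y : α) : Prop := npre x y ∧ npre y x

/-- An ideal: contains `0`, closed under `∨`, downward closed under `≼`. -/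
def IsIdeal (I : Set α) : Prop :=
  zero ∈ I ∧ (∀ x ∈ I, ∀ y ∈ I, join x y ∈ I) ∧ (∀ x y : α, y ∈ I → npre x y → x ∈ I)

/-- A prime ideal: a proper ideal such that `a∧b ∈ P` implies `a ∈ P` or `b ∈ P`. -/
def IsPrimeIdeal (P : Set α) : Prop :=
  IsIdeal P ∧ P ≠ Set.univ ∧ ∀ a b : α, meet a b ∈ P → a ∈ P ∨ b ∈ P

/-- The congruence `θ_P` associated with an ideal `P`. -/
def theta (P : Set α) (x y : α) : Prop :=
  join (rcomp x (inter x y)) (rcomp y (inter x y)) ∈ P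

end SkewBooleanInterAlgebra

open SkewBooleanInterAlgebra

section Aux

variable {α : Type u} [SkewBooleanInterAlgebra α]

lemma my_zero_meet (x : α) : meet zero x = zero := by
  have h := absorb₁ (zero : α) x
  rwa [zero_join] at h

lemma my_meet_zero (x : α) : meet x zero = zero := by
  have h := absorb₂ (zero : α) x
  rwa [join_zero] at h

lemma meet_zero_of_aba {a b : α} (h : meet a (meet b a) = zero) : meet a b = zero := by
  calc meet a b = meet (meet a b) (meet a b) := (meet_idem _).symm
    _ = meet (meet a (meet b a)) b := by
        rw [meet_assoc, ← meet_assoc b a b, ← meet_assoc]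
    _ = zero := by rw [h, my_zero_meet]

lemma meet_zero_swap {a b : α} (h : meet a b = zero) : meet b a = zero := by
  calc meet b a = meet (meet b a) (meet b a) := (meet_idem _).symm
    _ = meet (meet b (meet a b)) a := by
        rw [meet_assoc, ← meet_assoc a b a, ← meet_assoc]
    _ = zero := by rw [h, my_meet_zero, my_zero_meet]

lemma nle_trans {x y z : α} (h1 : nle x y) (h2 : nle y z) : nle x z := by
  obtain ⟨hxy, hyx⟩ := h1; obtain ⟨hyz, hzy⟩ := h2
  constructor
  · calc meet x z = meet (meet x y) z := by rw [hxy]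
      _ = meet x (meet y z) := meet_assoc _ _ _
      _ = meet x y := by rw [hyz]
      _ = x := hxy
  · calc meet z x = meet z (meet y x) := by rw [hyx]
      _ = meet (meet z y) x := (meet_assoc _ _ _).symm
      _ = meet y x := by rw [hzy]
      _ = x := hyx

lemma nle_npre {x y : α} (h : nle x y) : npre x y := by
  unfold npre; rw [h.2, meet_idem]

lemma npre_trans_aux (x y z : α) (hy : meet y (meet z y) = y) :
    meet (meet x (meet y x)) (meet z (meet x (meet y x))) = meet x (meet y x) := by
  have e1 : meet (meet x (meet y x)) (meet z (meet x (meet y x)))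
      = meet x (meet y (meet x (meet z (meet x (meet y x)))))  := by
    simp only [meet_assoc]
  rw [e1, normality y x z, ← meet_assoc x x, meet_idem,
    normality z x y, meet_idem, ← meet_assoc z y x, ← meet_assoc y (meet z y) x, hy]

lemma npre_trans {x y z : α} (h1 : npre x y) (h2 : npre y z) : npre x z := by
  have h := npre_trans_aux x y z h2
  unfold npre at *
  rw [h1] at h
  exact h

lemma meet_npre_left (x y : α) : npre (meet x y) x := by
  unfold npre
  rw [← meet_assoc x x y, meet_idem, meet_idem]

lemma meet_npre_right (x y : α) : npre (meet x y) y := by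
  unfold npre
  have e1 : meet (meet x y) (meet y (meet x y)) = meet x (meet y (meet y (meet x y))) := by
    simp only [meet_assoc]
  rw [e1, ← meet_assoc y y, meet_idem, normality x y x y, ← meet_assoc x x, meet_idem, meet_idem]

lemma npre_join_left (a b : α) : npre a (join a b) := by
  unfold npre
  rw [meet_distrib_right, meet_idem, absorb₁]

lemma npre_join_right (a b : α) : npre b (join a b) := by
  unfold npre
  rw [meet_distrib_right, meet_idem, absorb₄, meet_idem]

lemma meet3_npre_mid (x p : α) : npre (meet x (meet p x)) p := by
  have h1 : npre (meet (meet x p) x) (meet x p) := meet_npre_left _ _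
  have h2 : npre (meet x p) p := meet_npre_right x p
  have h := npre_trans h1 h2
  rwa [meet_assoc] at h

lemma rcomp_meet' (x y : α) : meet (meet x (meet y x)) (rcomp x y) = zero :=
  meet_zero_swap (rcomp_meet x y)

lemma rcomp_nle (x y : α) : nle (rcomp x y) x := by
  constructor
  · calc meet (rcomp x y) x
        = meet (rcomp x y) (join (rcomp x y) (meet x (meet y x))) := by rw [rcomp_join]
      _ = rcomp x y := absorb₁ _ _
  · calc meet x (rcomp x y)
        = meet (join (rcomp x y) (meet x (meet y x))) (rcomp x y) := by rw [rcomp_join]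
      _ = join (meet (rcomp x y) (rcomp x y)) (meet (meet x (meet y x)) (rcomp x y)) :=
          meet_distrib_right _ _ _
      _ = join (rcomp x y) zero := by rw [meet_idem, rcomp_meet']
      _ = rcomp x y := join_zero _

lemma rcomp_meet_zero (x p : α) : meet (rcomp x p) p = zero := by
  have hsx := rcomp_nle x p
  have hse := rcomp_meet x p
  have sps : meet (rcomp x p) (meet p (rcomp x p)) = zero := by
    calc meet (rcomp x p) (meet p (rcomp x p))
        = meet (meet (rcomp x p) x) (meet p (meet x (rcomp x p))) := by rw [hsx.1, hsx.2]
      _ = meet (meet (rcomp x p) (meet x (meet p x))) (rcomp x p) := by simp only [meet_assoc]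
      _ = zero := by rw [hse, my_zero_meet]
  exact meet_zero_of_aba sps

lemma rcomp_nle_join (x p : α) : nle (rcomp x p) (join x p) := by
  have h1 := (rcomp_nle x p).1
  have h2 := (rcomp_nle x p).2
  have h3 := rcomp_meet_zero x p
  have h4 : meet p (rcomp x p) = zero := meet_zero_swap h3
  constructor
  · rw [meet_distrib_left, h1, h3, join_zero]
  · rw [meet_distrib_right, h2, h4, join_zero]

lemma rcomp_nle_join' (x p : α) : nle (rcomp x p) (join p x) := by
  have h1 := (rcomp_nle x p).1
  have h2 := (rcomp_nle x p).2
  have h3 := rcomp_meet_zero x p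
  have h4 : meet p (rcomp x p) = zero := meet_zero_swap h3
  constructor
  · rw [meet_distrib_left, h1, h3, zero_join]
  · rw [meet_distrib_right, h2, h4, zero_join]

lemma my_nle_inter {z x y : α} (h1 : nle z x) (h2 : nle z y) : nle z (inter x y) :=
  inter_glb x y z h1 h2

lemma nle_inter_join (x y : α) : nle (inter x y) (join x y) := by
  have hx := inter_le_left x y
  have hy := inter_le_right x y
  constructor
  · rw [meet_distrib_left, hx.1, hy.1, join_idem]
  · rw [meet_distrib_right, hx.2, hy.2, join_idem]

lemma meet_comm_of_nle {b c d : α} (hc : nle c b) (hd : nle d b) : meet c d = meet d c := by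
  calc meet c d = meet (meet b c) (meet d b) := by rw [hc.2, hd.1]
    _ = meet b (meet c (meet d b)) := meet_assoc _ _ _
    _ = meet b (meet d (meet c b)) := normality _ _ _ _
    _ = meet (meet b d) (meet c b) := (meet_assoc _ _ _).symm
    _ = meet d c := by rw [hd.2, hc.1]

lemma meet_nle_left_of {b c d : α} (hc : nle c b) (hd : nle d b) : nle (meet c d) c := by
  have hcomm := meet_comm_of_nle hc hd
  constructor
  · rw [meet_assoc, ← hcomm, ← meet_assoc, meet_idem]
  · rw [← meet_assoc, meet_idem]

lemma meet_nle_right_of {b c d : α} (hc : nle c b) (hd : nle d b) : nle (meet c d) d := by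
  have h := meet_nle_left_of hd hc
  rwa [← meet_comm_of_nle hc hd] at h

lemma theta_char {P : Set α} (hP : IsPrimeIdeal P) (x y : α) :
    theta P x y ↔ (x ∈ P ∧ y ∈ P) ∨ inter x y ∉ P := by
  have hI := hP.1
  have hmx : nle (inter x y) x := inter_le_left x y
  have hmy : nle (inter x y) y := inter_le_right x y
  have hex : meet x (meet (inter x y) x) = inter x y := by rw [hmx.1, hmx.2]
  have hey : meet y (meet (inter x y) y) = inter x y := by rw [hmy.1, hmy.2]
  have hfx : meet (rcomp x (inter x y)) (inter x y) = zero := by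
    have h := rcomp_meet x (inter x y); rwa [hex] at h
  have hfy : meet (rcomp y (inter x y)) (inter x y) = zero := by
    have h := rcomp_meet y (inter x y); rwa [hey] at h
  have hjx : join (rcomp x (inter x y)) (inter x y) = x := by
    have h := rcomp_join x (inter x y); rwa [hex] at h
  have hjy : join (rcomp y (inter x y)) (inter x y) = y := by
    have h := rcomp_join y (inter x y); rwa [hey] at h
  have hsplit : theta P x y ↔ rcomp x (inter x y) ∈ P ∧ rcomp y (inter x y) ∈ P := by
    unfold theta
    constructor
    · intro h
      exact ⟨hI.2.2 _ _ h (npre_join_left _ _), hI.2.2 _ _ h (npre_join_right _ _)⟩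
    · rintro ⟨h1, h2⟩
      exact hI.2.1 _ h1 _ h2
  rw [hsplit]
  constructor
  · rintro ⟨h1, h2⟩
    by_cases hm : inter x y ∈ P
    · exact Or.inl ⟨by rw [← hjx]; exact hI.2.1 _ h1 _ hm,
        by rw [← hjy]; exact hI.2.1 _ h2 _ hm⟩
    · exact Or.inr hm
  · rintro (⟨hx, hy⟩ | hm)
    · exact ⟨hI.2.2 _ _ hx (nle_npre (rcomp_nle x (inter x y))),
        hI.2.2 _ _ hy (nle_npre (rcomp_nle y (inter x y)))⟩
    · constructor
      · rcases hP.2.2 _ _ (show meet (rcomp x (inter x y)) (inter x y) ∈ P by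
          rw [hfx]; exact hI.1) with h | h
        · exact h
        · exact absurd h hm
      · rcases hP.2.2 _ _ (show meet (rcomp y (inter x y)) (inter x y) ∈ P by
          rw [hfy]; exact hI.1) with h | h
        · exact h
        · exact absurd h hm

lemma rcomp_notmem {P : Set α} (hI : IsIdeal P) {x p : α} (hp : p ∈ P) (hx : x ∉ P) :
    rcomp x p ∉ P := fun hs => hx (by
  rw [← rcomp_join x p]
  exact hI.2.1 _ hs _ (hI.2.2 _ _ hp (meet3_npre_mid x p)))

lemma inter_notmem_of {P : Set α} (hP : IsPrimeIdeal P) {base u v c d : α}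
    (hc : nle c base) (hd : nle d base) (hcu : nle c u) (hdv : nle d v)
    (hcP : c ∉ P) (hdP : d ∉ P) : inter u v ∉ P := by
  have hw : nle (meet c d) (inter u v) :=
    my_nle_inter (nle_trans (meet_nle_left_of hc hd) hcu)
      (nle_trans (meet_nle_right_of hc hd) hdv)
  intro h
  exact (fun h' => (hP.2.2 c d h').elim hcP hdP) (hP.1.2.2 _ _ h (nle_npre hw))

end Aux

theorem section_join_iff {α : Type u} [SkewBooleanInterAlgebra α] (a₁ a₂ : α)
    (hsec : ∀ P : Set α, IsPrimeIdeal P → a₁ ∉ P → a₂ ∉ P → theta P a₁ a₂) :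
    ∀ (P : Set α), IsPrimeIdeal P → ∀ t : α,
      ((a₁ ∉ P ∧ theta P t a₁) ∨ (a₂ ∉ P ∧ theta P t a₂)) ↔
        (join a₁ a₂ ∉ P ∧ theta P t (join a₁ a₂)) := by
  intro P hP t
  have hI := hP.1
  -- reduce `theta` to `inter`-membership
  have hred : ∀ u : α, (u ∉ P ∧ theta P t u) ↔ inter t u ∉ P := by
    intro u
    constructor
    · rintro ⟨hu, ht⟩
      rcases (theta_char hP t u).1 ht with ⟨_, h⟩ | h
      · exact absurd h hu
      · exact h
    · intro h
      refine ⟨fun hu => h (hI.2.2 _ _ hu (nle_npre (inter_le_right t u))), ?_⟩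
      exact (theta_char hP t u).2 (Or.inr h)
  rw [hred a₁, hred a₂, hred (join a₁ a₂)]
  have hint_left : ∀ {u v : α}, inter u v ∉ P → u ∉ P :=
    fun h hu => h (hI.2.2 _ _ hu (nle_npre (inter_le_left _ _)))
  have hint_right : ∀ {u v : α}, inter u v ∉ P → v ∉ P :=
    fun h hv => h (hI.2.2 _ _ hv (nle_npre (inter_le_right _ _)))
  have hm_fact : a₁ ∉ P → a₂ ∉ P → inter a₁ a₂ ∉ P := fun h1 h2 =>
    ((theta_char hP a₁ a₂).1 (hsec P hP h1 h2)).resolve_left (fun hc => h1 hc.1)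
  constructor
  · rintro (h1 | h2)
    · -- inter t a₁ ∉ P
      have ha₁ : a₁ ∉ P := hint_right h1
      by_cases h2P : a₂ ∈ P
      · exact inter_notmem_of hP (inter_le_right t a₁) (rcomp_nle a₁ a₂)
          (inter_le_left t a₁) (rcomp_nle_join a₁ a₂) h1 (rcomp_notmem hI h2P ha₁)
      · exact inter_notmem_of hP (inter_le_right t a₁) (inter_le_left a₁ a₂)
          (inter_le_left t a₁) (nle_inter_join a₁ a₂) h1 (hm_fact ha₁ h2P)
    · -- inter t a₂ ∉ P
      have ha₂ : a₂ ∉ P := hint_right h2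
      by_cases h1P : a₁ ∈ P
      · exact inter_notmem_of hP (inter_le_right t a₂) (rcomp_nle a₂ a₁)
          (inter_le_left t a₂) (rcomp_nle_join' a₂ a₁) h2 (rcomp_notmem hI h1P ha₂)
      · exact inter_notmem_of hP (inter_le_right t a₂) (inter_le_right a₁ a₂)
          (inter_le_left t a₂) (nle_inter_join a₁ a₂) h2 (hm_fact h1P ha₂)
  · intro h
    have hbP : join a₁ a₂ ∉ P := hint_right h
    by_cases h1P : a₁ ∈ P
    · have ha₂ : a₂ ∉ P := fun h2 => hbP (hI.2.1 _ h1P _ h2)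
      exact Or.inr (inter_notmem_of hP (inter_le_right t (join a₁ a₂)) (rcomp_nle_join' a₂ a₁)
        (inter_le_left t (join a₁ a₂)) (rcomp_nle a₂ a₁) h (rcomp_notmem hI h1P ha₂))
    · by_cases h2P : a₂ ∈ P
      · exact Or.inl (inter_notmem_of hP (inter_le_right t (join a₁ a₂)) (rcomp_nle_join a₁ a₂)
          (inter_le_left t (join a₁ a₂)) (rcomp_nle a₁ a₂) h (rcomp_notmem hI h2P h1P))
      · exact Or.inr (inter_notmem_of hP (inter_le_right t (join a₁ a₂)) (nle_inter_join a₁ a₂)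
          (inter_le_left t (join a₁ a₂)) (inter_le_right a₁ a₂) h (hm_fact h1P h2P))
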